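/- Every maximal clique of routes of G(H) with respect to the canonical bipartite framing has cardinality exactly n + m + |E|. -/

import Mathlib

/-!
Record a route `(a, (i, j), c)` as the label `a` at position `j` of row `i` and as the label `c`
at position `i` of column `j`. Coherence says that along every row and every column a label `2`
is never followed by a label `1`, and maximality says that no admissible label is missing. Such a
maximal staircase on the `d` neighbours of a vertex carries both labels at exactly one position and
one label everywhere else, so it has `d + 1` labels. At a single edge, the set `S ⊆ {1,2}²` of
label pairs `(a, c)` used by the clique satisfies `|S| + 1 = |π₁ S| + |π₂ S|`. Summing over the
edges gives `|C| + |E| = (|E| + n) + (|E| + m)`.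
-/

open Finset Filter Pointwise

/-- Neighbors in the right shore `T` of a left vertex `i`. -/
def Nbr (E : Finset (ℕ × ℕ)) (i : ℕ) : Finset ℕ :=
  (E.filter (fun p => p.1 = i)).image Prod.snd

/-- Neighbors in the left shore `S` of a right vertex `j`. -/
def Nbr' (E : Finset (ℕ × ℕ)) (j : ℕ) : Finset ℕ :=
  (E.filter (fun p => p.2 = j)).image Prod.fst

/-- A route of `G(H)`: a triple `(a, (i,j), c)` with `a, c ∈ {1,2}`, `(i,j) ∈ E`,
representing the path `α_{a,i} β_{i,j} γ_{j,c}`. -/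
abbrev Route : Type := ℕ × (ℕ × ℕ) × ℕ

def IsRoute (E : Finset (ℕ × ℕ)) (r : Route) : Prop :=
  (r.1 = 1 ∨ r.1 = 2) ∧ r.2.1 ∈ E ∧ (r.2.2 = 1 ∨ r.2.2 = 2)

/-- Two routes are in conflict with respect to the canonical bipartite framing. -/
def Conflict (r r' : Route) : Prop :=
  (r.2.1 = r'.2.1 ∧
    ((r.1 = 1 ∧ r.2.2 = 2 ∧ r'.1 = 2 ∧ r'.2.2 = 1) ∨
     (r.1 = 2 ∧ r.2.2 = 1 ∧ r'.1 = 1 ∧ r'.2.2 = 2))) ∨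
  (r.2.1.1 = r'.2.1.1 ∧ r.2.1.2 ≠ r'.2.1.2 ∧
    ((r.2.1.2 < r'.2.1.2 ∧ r'.1 = 1 ∧ r.1 = 2) ∨
     (r'.2.1.2 < r.2.1.2 ∧ r.1 = 1 ∧ r'.1 = 2))) ∨
  (r.2.1.2 = r'.2.1.2 ∧ r.2.1.1 ≠ r'.2.1.1 ∧
    ((r.2.1.1 < r'.2.1.1 ∧ r.2.2 = 2 ∧ r'.2.2 = 1) ∨
     (r'.2.1.1 < r.2.1.1 ∧ r'.2.2 = 2 ∧ r.2.2 = 1)))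

/-- A clique: a set of pairwise coherent routes. -/
def IsClique (E : Finset (ℕ × ℕ)) (C : Set Route) : Prop :=
  (∀ r ∈ C, IsRoute E r) ∧ ∀ r ∈ C, ∀ r' ∈ C, r ≠ r' → ¬ Conflict r r'

/-- A maximal clique of routes. -/
def IsMaxClique (E : Finset (ℕ × ℕ)) (C : Set Route) : Prop :=
  IsClique E C ∧ ∀ C' : Set Route, IsClique E C' → C ⊆ C' → C' = C

lemma mem_Nbr {E : Finset (ℕ × ℕ)} {i j : ℕ} : j ∈ Nbr E i ↔ (i, j) ∈ E := by
  simp [Nbr]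

lemma mem_Nbr' {E : Finset (ℕ × ℕ)} {i j : ℕ} : i ∈ Nbr' E j ↔ (i, j) ∈ E := by
  simp [Nbr']

lemma Conflict.symm {r r' : Route} (h : Conflict r r') : Conflict r' r := by
  unfold Conflict at *
  obtain ⟨h1, h2⟩ | ⟨h1, h2, h3⟩ | ⟨h1, h2, h3⟩ := h
  · exact Or.inl ⟨h1.symm, by tauto⟩
  · exact Or.inr (Or.inl ⟨h1.symm, h2.symm, by tauto⟩)
  · exact Or.inr (Or.inr ⟨h1.symm, h2.symm, by tauto⟩)

lemma card_eq_of_subset_one_two {s : Finset ℕ} (hs : s ⊆ {1, 2}) (hne : s.Nonempty) :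
    #s = if 1 ∈ s ∧ 2 ∈ s then 2 else 1 := by
  have key : ∀ s ∈ ({1, 2} : Finset ℕ).powerset, s.Nonempty →
      #s = if 1 ∈ s ∧ 2 ∈ s then 2 else 1 := by decide
  exact key s (mem_powerset.2 hs) hne

lemma card_add_one_eq_card_image_fst_add_card_image_snd {S : Finset (ℕ × ℕ)}
    (hS : S ⊆ {1, 2} ×ˢ {1, 2}) (hne : S.Nonempty) (hanti : ¬((1, 2) ∈ S ∧ (2, 1) ∈ S))
    (hdiag : (1, 1) ∈ S → (2, 2) ∈ S → (1, 2) ∈ S ∨ (2, 1) ∈ S) :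
    #S + 1 = #(S.image Prod.fst) + #(S.image Prod.snd) := by
  have key : ∀ S ∈ (({1, 2} ×ˢ {1, 2} : Finset (ℕ × ℕ))).powerset, S.Nonempty →
      ¬((1, 2) ∈ S ∧ (2, 1) ∈ S) → ((1, 1) ∈ S → (2, 2) ∈ S → (1, 2) ∈ S ∨ (2, 1) ∈ S) →
      #S + 1 = #(S.image Prod.fst) + #(S.image Prod.snd) := by decide
  exact key S (mem_powerset.2 hS) hne hanti hdiag

section Staircase

def IsStaircase (lab : ℕ → Finset ℕ) : Prop :=
  ∀ p q, p < q → 2 ∈ lab p → 1 ∉ lab q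

def Admissible (lab : ℕ → Finset ℕ) (p ℓ : ℕ) : Prop :=
  (ℓ = 1 → ∀ q < p, 2 ∉ lab q) ∧ (ℓ = 2 → ∀ q, p < q → 1 ∉ lab q)

variable {lab : ℕ → Finset ℕ}

lemma IsStaircase.admissible_of_mem (h : IsStaircase lab) {p ℓ : ℕ} (hℓ : ℓ ∈ lab p) :
    Admissible lab p ℓ :=
  ⟨fun h1 q hq h2 => h q p hq h2 (h1 ▸ hℓ), fun h2 q hq h1 => h p q hq (h2 ▸ hℓ) h1⟩

lemma IsStaircase.exists_admissible (h : IsStaircase lab) (p : ℕ) :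
    ∃ ℓ, (ℓ = 1 ∨ ℓ = 2) ∧ Admissible lab p ℓ := by
  by_cases h1 : ∀ q < p, 2 ∉ lab q
  · exact ⟨1, Or.inl rfl, fun _ => h1, by omega⟩
  · obtain ⟨q, hqp, hq⟩ : ∃ q < p, 2 ∈ lab q := by simpa using h1
    exact ⟨2, Or.inr rfl, by omega, fun _ q' hpq' => h q q' (hqp.trans hpq') hq⟩

theorem IsStaircase.sum_card (h : IsStaircase lab) {L : Finset ℕ} (hL : L.Nonempty)
    (hsub : ∀ p, lab p ⊆ {1, 2}) (hsupp : ∀ p ∉ L, lab p = ∅)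
    (hmax : ∀ p ∈ L, ∀ ℓ, (ℓ = 1 ∨ ℓ = 2) → Admissible lab p ℓ → ℓ ∈ lab p) :
    ∑ p ∈ L, #(lab p) = #L + 1 := by
  classical
  have hmem : ∀ {p ℓ}, ℓ ∈ lab p → p ∈ L := fun {p ℓ} hℓ => by
    by_contra hp
    simp [hsupp p hp] at hℓ
  have htwo : (L.filter (2 ∈ lab ·)).Nonempty := by
    refine ⟨L.max' hL, mem_filter.2 ⟨L.max'_mem hL, ?_⟩⟩
    refine hmax _ (L.max'_mem hL) 2 (Or.inr rfl) ⟨by omega, fun _ q hq h1 => ?_⟩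
    exact absurd (L.le_max' q (hmem h1)) (not_le.2 hq)
  set p₀ := (L.filter (2 ∈ lab ·)).min' htwo
  obtain ⟨hp₀, h2p₀⟩ := mem_filter.1 ((L.filter (2 ∈ lab ·)).min'_mem htwo)
  have h1p₀ : 1 ∈ lab p₀ := by
    refine hmax p₀ hp₀ 1 (Or.inl rfl) ⟨fun _ q hq h2 => ?_, by omega⟩
    exact absurd (min'_le _ q (mem_filter.2 ⟨hmem h2, h2⟩)) (not_le.2 hq)
  have hboth : ∀ p, 1 ∈ lab p ∧ 2 ∈ lab p ↔ p = p₀ := by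
    refine fun p => ⟨fun ⟨h1p, h2p⟩ => ?_, fun hp => hp ▸ ⟨h1p₀, h2p₀⟩⟩
    rcases lt_trichotomy p p₀ with hlt | heq | hgt
    · exact absurd h1p₀ (h p p₀ hlt h2p)
    · exact heq
    · exact absurd h1p (h p₀ p hgt h2p₀)
  have hcard : ∀ p ∈ L, #(lab p) = 1 + if p = p₀ then 1 else 0 := by
    intro p hp
    obtain ⟨ℓ, hℓ, hadm⟩ := h.exists_admissible p
    rw [card_eq_of_subset_one_two (hsub p) ⟨ℓ, hmax p hp ℓ hℓ hadm⟩]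
    simp only [hboth]
    split_ifs <;> rfl
  rw [sum_congr rfl hcard, sum_add_distrib, sum_ite_eq' L p₀, if_pos hp₀, sum_const,
    smul_eq_mul, mul_one]

end Staircase

open Classical in
noncomputable def edgeLabels (C : Set Route) (e : ℕ × ℕ) : Finset (ℕ × ℕ) :=
  (({1, 2} : Finset ℕ) ×ˢ ({1, 2} : Finset ℕ)).filter fun ac => (ac.1, e, ac.2) ∈ C

noncomputable def rowLabels (C : Set Route) (e : ℕ × ℕ) : Finset ℕ :=
  (edgeLabels C e).image Prod.fst

noncomputable def colLabels (C : Set Route) (e : ℕ × ℕ) : Finset ℕ :=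
  (edgeLabels C e).image Prod.snd

lemma edgeLabels_subset (C : Set Route) (e : ℕ × ℕ) : edgeLabels C e ⊆ {1, 2} ×ˢ {1, 2} := by
  classical exact filter_subset _ _

lemma rowLabels_subset (C : Set Route) (e : ℕ × ℕ) : rowLabels C e ⊆ {1, 2} :=
  image_subset_iff.2 fun _ h => (mem_product.1 (edgeLabels_subset C e h)).1

lemma colLabels_subset (C : Set Route) (e : ℕ × ℕ) : colLabels C e ⊆ {1, 2} :=
  image_subset_iff.2 fun _ h => (mem_product.1 (edgeLabels_subset C e h)).2

namespace IsClique

variable {E : Finset (ℕ × ℕ)} {C : Set Route}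

lemma mem_edgeLabels (hC : IsClique E C) {a c : ℕ} {e : ℕ × ℕ} :
    (a, c) ∈ edgeLabels C e ↔ (a, e, c) ∈ C := by
  simp only [edgeLabels, mem_filter, mem_product, mem_insert, mem_singleton,
    and_iff_right_iff_imp]
  intro h
  exact ⟨(hC.1 _ h).1, (hC.1 _ h).2.2⟩

lemma mem_rowLabels (hC : IsClique E C) {a : ℕ} {e : ℕ × ℕ} :
    a ∈ rowLabels C e ↔ ∃ c, (a, e, c) ∈ C := by
  simp [rowLabels, hC.mem_edgeLabels]

lemma mem_colLabels (hC : IsClique E C) {c : ℕ} {e : ℕ × ℕ} :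
    c ∈ colLabels C e ↔ ∃ a, (a, e, c) ∈ C := by
  simp [colLabels, hC.mem_edgeLabels]

lemma edgeLabels_eq_empty (hC : IsClique E C) {e : ℕ × ℕ} (he : e ∉ E) :
    edgeLabels C e = ∅ :=
  eq_empty_of_forall_notMem fun _ h => he (hC.1 _ (hC.mem_edgeLabels.1 h)).2.1

lemma isStaircase_rowLabels (hC : IsClique E C) (i : ℕ) :
    IsStaircase fun j => rowLabels C (i, j) := by
  intro p q hpq h2 h1
  obtain ⟨c, hc⟩ := hC.mem_rowLabels.1 h2
  obtain ⟨c', hc'⟩ := hC.mem_rowLabels.1 h1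
  exact hC.2 _ hc _ hc' (by simp) (Or.inr (Or.inl ⟨rfl, hpq.ne, Or.inl ⟨hpq, rfl, rfl⟩⟩))

lemma isStaircase_colLabels (hC : IsClique E C) (j : ℕ) :
    IsStaircase fun i => colLabels C (i, j) := by
  intro p q hpq h2 h1
  obtain ⟨a, ha⟩ := hC.mem_colLabels.1 h2
  obtain ⟨a', ha'⟩ := hC.mem_colLabels.1 h1
  exact hC.2 _ ha _ ha' (by simp) (Or.inr (Or.inr ⟨rfl, hpq.ne, Or.inl ⟨hpq, rfl, rfl⟩⟩))

lemma ncard_eq_sum_card_edgeLabels (hC : IsClique E C) :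
    C.ncard = ∑ e ∈ E, #(edgeLabels C e) := by
  have hC' : C = (fun p : (_ : ℕ × ℕ) × (ℕ × ℕ) => ((p.2.1, p.1, p.2.2) : Route)) ''
      ↑(E.sigma (edgeLabels C)) := by
    ext ⟨a, e, c⟩
    simp only [Set.mem_image, mem_coe, mem_sigma, hC.mem_edgeLabels, Sigma.exists, Prod.mk.injEq]
    refine ⟨fun h => ⟨e, (a, c), ⟨(hC.1 _ h).2.1, h⟩, rfl, rfl, rfl⟩, ?_⟩
    rintro ⟨e, ⟨a, c⟩, ⟨-, h⟩, rfl, rfl, rfl⟩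
    exact h
  have hinj : Function.Injective
      fun p : (_ : ℕ × ℕ) × (ℕ × ℕ) => ((p.2.1, p.1, p.2.2) : Route) := by
    rintro ⟨e, a, c⟩ ⟨e', a', c'⟩ h
    simp only [Prod.mk.injEq] at h
    obtain ⟨rfl, rfl, rfl⟩ := h
    rfl
  conv_lhs => rw [hC']
  rw [Set.ncard_image_of_injective _ hinj, Set.ncard_coe_finset, card_sigma]

end IsClique

namespace IsMaxClique

variable {E : Finset (ℕ × ℕ)} {C : Set Route}

lemma mem_of_forall_not_conflict (hC : IsMaxClique E C) {r : Route} (hr : IsRoute E r)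
    (h : ∀ r' ∈ C, ¬ Conflict r r') : r ∈ C := by
  have hclique : IsClique E (insert r C) := by
    refine ⟨fun x hx => ?_, ?_⟩
    · rcases hx with rfl | hx
      exacts [hr, hC.1.1 x hx]
    · rintro x (rfl | hx) y (rfl | hy) hne
      · exact absurd rfl hne
      · exact h y hy
      · exact fun hc => h x hx hc.symm
      · exact hC.1.2 x hx y hy hne
  exact hC.2 _ hclique (Set.subset_insert r C) ▸ Set.mem_insert r C

-- A route conflicting with `(a, (i, j), c)` at the same edge is `(c, (i, j), a)`.
lemma mem_of_admissible (hC : IsMaxClique E C) {a c i j : ℕ} (he : (i, j) ∈ E)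
    (ha : a = 1 ∨ a = 2) (hc : c = 1 ∨ c = 2)
    (hrow : Admissible (fun j' => rowLabels C (i, j')) j a)
    (hcol : Admissible (fun i' => colLabels C (i', j)) i c)
    (hedge : a = c ∨ (c, (i, j), a) ∉ C) : (a, (i, j), c) ∈ C := by
  refine hC.mem_of_forall_not_conflict ⟨ha, he, hc⟩ ?_
  rintro ⟨a', ⟨i', j'⟩, c'⟩ hr' hconf
  rcases hconf with ⟨hij, hd⟩ | ⟨rfl, -, hd⟩ | ⟨rfl, -, hd⟩
  · obtain ⟨rfl, rfl⟩ := Prod.ext_iff.1 hij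
    rcases hd with ⟨rfl, rfl, rfl, rfl⟩ | ⟨rfl, rfl, rfl, rfl⟩ <;> simp_all
  · have hlab : a' ∈ rowLabels C (i, j') := hC.1.mem_rowLabels.2 ⟨c', hr'⟩
    rcases hd with ⟨hlt, rfl, rfl⟩ | ⟨hlt, rfl, rfl⟩
    exacts [hrow.2 rfl j' hlt hlab, hrow.1 rfl j' hlt hlab]
  · have hlab : c' ∈ colLabels C (i', j) := hC.1.mem_colLabels.2 ⟨a', hr'⟩
    rcases hd with ⟨hlt, rfl, rfl⟩ | ⟨hlt, rfl, rfl⟩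
    exacts [hcol.2 rfl i' hlt hlab, hcol.1 rfl i' hlt hlab]

lemma exists_mem (hC : IsMaxClique E C) {i j : ℕ} (he : (i, j) ∈ E) :
    ∃ a c, (a, (i, j), c) ∈ C := by
  by_contra! h
  obtain ⟨a, ha, hrow⟩ := (hC.1.isStaircase_rowLabels i).exists_admissible j
  obtain ⟨c, hc, hcol⟩ := (hC.1.isStaircase_colLabels j).exists_admissible i
  exact h a c (hC.mem_of_admissible he ha hc hrow hcol (Or.inr (h c a)))

lemma mem_rowLabels_of_admissible (hC : IsMaxClique E C) {a i j : ℕ} (he : (i, j) ∈ E)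
    (ha : a = 1 ∨ a = 2) (hrow : Admissible (fun j' => rowLabels C (i, j')) j a) :
    a ∈ rowLabels C (i, j) := by
  have hstair := hC.1.isStaircase_colLabels j
  rw [hC.1.mem_rowLabels]
  by_cases haa : a ∈ colLabels C (i, j)
  · exact ⟨a, hC.mem_of_admissible he ha ha hrow (hstair.admissible_of_mem haa) (Or.inl rfl)⟩
  · obtain ⟨a₀, c, hac⟩ := hC.exists_mem he
    refine ⟨c, hC.mem_of_admissible he ha (hC.1.1 _ hac).2.2 hrow
      (hstair.admissible_of_mem (hC.1.mem_colLabels.2 ⟨a₀, hac⟩))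
      (Or.inr fun h => haa (hC.1.mem_colLabels.2 ⟨c, h⟩))⟩

lemma mem_colLabels_of_admissible (hC : IsMaxClique E C) {c i j : ℕ} (he : (i, j) ∈ E)
    (hc : c = 1 ∨ c = 2) (hcol : Admissible (fun i' => colLabels C (i', j)) i c) :
    c ∈ colLabels C (i, j) := by
  have hstair := hC.1.isStaircase_rowLabels i
  rw [hC.1.mem_colLabels]
  by_cases hcc : c ∈ rowLabels C (i, j)
  · exact ⟨c, hC.mem_of_admissible he hc hc (hstair.admissible_of_mem hcc) hcol (Or.inl rfl)⟩
  · obtain ⟨a, c₀, hac⟩ := hC.exists_mem he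
    refine ⟨a, hC.mem_of_admissible he (hC.1.1 _ hac).1 hc
      (hstair.admissible_of_mem (hC.1.mem_rowLabels.2 ⟨c₀, hac⟩)) hcol
      (Or.inr fun h => hcc (hC.1.mem_rowLabels.2 ⟨a, h⟩))⟩

lemma card_edgeLabels_add_one (hC : IsMaxClique E C) {i j : ℕ} (he : (i, j) ∈ E) :
    #(edgeLabels C (i, j)) + 1 = #(rowLabels C (i, j)) + #(colLabels C (i, j)) := by
  refine card_add_one_eq_card_image_fst_add_card_image_snd (edgeLabels_subset C _) ?_ ?_ ?_
  · obtain ⟨a, c, hac⟩ := hC.exists_mem he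
    exact ⟨(a, c), hC.1.mem_edgeLabels.2 hac⟩
  · simp only [hC.1.mem_edgeLabels]
    exact fun ⟨h12, h21⟩ => hC.1.2 _ h12 _ h21 (by simp) (Or.inl ⟨rfl, Or.inl ⟨rfl, rfl, rfl, rfl⟩⟩)
  · simp only [hC.1.mem_edgeLabels]
    intro h11 h22
    by_contra! h
    exact h.1 (hC.mem_of_admissible he (Or.inl rfl) (Or.inr rfl)
      ((hC.1.isStaircase_rowLabels i).admissible_of_mem (hC.1.mem_rowLabels.2 ⟨1, h11⟩))
      ((hC.1.isStaircase_colLabels j).admissible_of_mem (hC.1.mem_colLabels.2 ⟨2, h22⟩))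
      (Or.inr h.2))

lemma sum_card_rowLabels (hC : IsMaxClique E C) {i : ℕ} (hi : (Nbr E i).Nonempty) :
    ∑ j ∈ Nbr E i, #(rowLabels C (i, j)) = #(Nbr E i) + 1 := by
  refine (hC.1.isStaircase_rowLabels i).sum_card hi (fun j => rowLabels_subset C _)
    (fun j hj => ?_) (fun j hj a ha hrow => hC.mem_rowLabels_of_admissible (mem_Nbr.1 hj) ha hrow)
  rw [rowLabels, hC.1.edgeLabels_eq_empty (mt mem_Nbr.2 hj), image_empty]

lemma sum_card_colLabels (hC : IsMaxClique E C) {j : ℕ} (hj : (Nbr' E j).Nonempty) :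
    ∑ i ∈ Nbr' E j, #(colLabels C (i, j)) = #(Nbr' E j) + 1 := by
  refine (hC.1.isStaircase_colLabels j).sum_card hj (fun i => colLabels_subset C _)
    (fun i hi => ?_) (fun i hi c hc hcol => hC.mem_colLabels_of_admissible (mem_Nbr'.1 hi) hc hcol)
  rw [colLabels, hC.1.edgeLabels_eq_empty (mt mem_Nbr'.2 hi), image_empty]

lemma sum_card_rowLabels_eq (hC : IsMaxClique E C) {s : Finset ℕ} (hs : ∀ e ∈ E, e.1 ∈ s)
    (hdeg : ∀ i ∈ s, (Nbr E i).Nonempty) :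
    ∑ e ∈ E, #(rowLabels C e) = #E + #s := by
  have hE : ∀ e : ℕ × ℕ, e ∈ E ↔ e.1 ∈ s ∧ e.2 ∈ Nbr E e.1 :=
    fun e => ⟨fun he => ⟨hs e he, mem_Nbr.2 he⟩, fun he => mem_Nbr.1 he.2⟩
  rw [card_eq_sum_ones E, sum_finset_product E s (Nbr E) hE, sum_finset_product E s (Nbr E) hE,
    sum_congr rfl fun i hi => hC.sum_card_rowLabels (hdeg i hi), sum_add_distrib]
  simp only [sum_const, smul_eq_mul, mul_one]

lemma sum_card_colLabels_eq (hC : IsMaxClique E C) {s : Finset ℕ} (hs : ∀ e ∈ E, e.2 ∈ s)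
    (hdeg : ∀ j ∈ s, (Nbr' E j).Nonempty) :
    ∑ e ∈ E, #(colLabels C e) = #E + #s := by
  have hE : ∀ e : ℕ × ℕ, e ∈ E ↔ e.2 ∈ s ∧ e.1 ∈ Nbr' E e.2 :=
    fun e => ⟨fun he => ⟨hs e he, mem_Nbr'.2 he⟩, fun he => mem_Nbr'.1 he.2⟩
  rw [card_eq_sum_ones E, sum_finset_product_right E s (Nbr' E) hE,
    sum_finset_product_right E s (Nbr' E) hE,
    sum_congr rfl fun j hj => hC.sum_card_colLabels (hdeg j hj), sum_add_distrib]
  simp only [sum_const, smul_eq_mul, mul_one]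

end IsMaxClique

theorem maxclique_card_general (n m : ℕ) (E : Finset (ℕ × ℕ))
    (hE : ∀ p ∈ E, 1 ≤ p.1 ∧ p.1 ≤ n ∧ 1 ≤ p.2 ∧ p.2 ≤ m)
    (hdegS : ∀ i ∈ Finset.Icc 1 n, 2 ≤ (Nbr E i).card)
    (hdegT : ∀ j ∈ Finset.Icc 1 m, 2 ≤ (Nbr' E j).card) :
    ∀ C : Set Route, IsMaxClique E C → C.ncard = n + m + E.card := by
  intro C hC
  have hrow := hC.sum_card_rowLabels_eq (s := Icc 1 n)
    (fun e he => mem_Icc.2 ⟨(hE e he).1, (hE e he).2.1⟩)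
    (fun i hi => card_pos.1 (by have := hdegS i hi; omega))
  have hcol := hC.sum_card_colLabels_eq (s := Icc 1 m)
    (fun e he => mem_Icc.2 ⟨(hE e he).2.2.1, (hE e he).2.2.2⟩)
    (fun j hj => card_pos.1 (by have := hdegT j hj; omega))
  have hsum : C.ncard + #E = ∑ e ∈ E, (#(rowLabels C e) + #(colLabels C e)) := by
    rw [hC.1.ncard_eq_sum_card_edgeLabels, card_eq_sum_ones E, ← sum_add_distrib]
    exact sum_congr rfl fun e he => hC.card_edgeLabels_add_one he
  rw [sum_add_distrib, hrow, hcol, Nat.card_Icc, Nat.card_Icc] at hsum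
  omega

/-- Every maximal clique of routes has cardinality `n + m + |E|`. -/
theorem maxclique_card (n m : ℕ) (hn : 1 ≤ n) (hm : 1 ≤ m) (E : Finset (ℕ × ℕ))
    (hE : ∀ p ∈ E, 1 ≤ p.1 ∧ p.1 ≤ n ∧ 1 ≤ p.2 ∧ p.2 ≤ m)
    (hdegS : ∀ i ∈ Finset.Icc 1 n, 2 ≤ (Nbr E i).card)
    (hdegT : ∀ j ∈ Finset.Icc 1 m, 2 ≤ (Nbr' E j).card) :
    ∀ C : Set Route, IsMaxClique E C → C.ncard = n + m + E.card :=
  maxclique_card_general n m E hE hdegS hdegT
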